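/- arXiv:0906.5103 — 3 statements merged into one kernel-verified Lean document; each statement's English description precedes it below -/
import Mathlib

section
/- For real numbers a, b ≥ 0 and β ≥ 1, one has (a+b)^β ≤ a^β + β·2^(β-1)·(a^(β-1)·b + b^β). -/
/-!
Convexity of `x ↦ x ^ β` puts its graph above the tangent line at `a + b`, so
`(a + b) ^ β ≤ a ^ β + β (a + b) ^ (β - 1) b`. It remains to bound the derivative term using
`(a + b) ^ (β - 1) ≤ (2 max a b) ^ (β - 1) ≤ 2 ^ (β - 1) (a ^ (β - 1) + b ^ (β - 1))`.
-/

namespace Real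

/-- Bernoulli's inequality applied at `s = -b / (a + b)`. -/
theorem add_rpow_le_rpow_add_mul_add_rpow_sub_one_mul {a b p : ℝ} (ha : 0 ≤ a) (hb : 0 ≤ b)
    (hp : 1 ≤ p) : (a + b) ^ p ≤ a ^ p + p * (a + b) ^ (p - 1) * b := by
  rcases (add_nonneg ha hb).eq_or_lt with hab | hab
  · rw [← hab, zero_rpow (by linarith)]
    positivity
  have hs : -1 ≤ -b / (a + b) := by
    rw [neg_div, neg_le_neg_iff]
    exact div_le_one_of_le₀ (by linarith) hab.le
  have hbern := one_add_mul_self_le_rpow_one_add hs hp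
  rw [show 1 + -b / (a + b) = a / (a + b) by field_simp; ring, div_rpow ha hab.le,
    le_div_iff₀ (rpow_pos_of_pos hab p)] at hbern
  calc (a + b) ^ p = (1 + p * (-b / (a + b))) * (a + b) ^ p + p * ((a + b) ^ p / (a + b)) * b := by
        field_simp; ring
    _ ≤ a ^ p + p * (a + b) ^ (p - 1) * b := by rw [← rpow_sub_one hab.ne']; linarith

theorem add_rpow_le_two_rpow_mul_add_rpow {a b q : ℝ} (ha : 0 ≤ a) (hb : 0 ≤ b) (hq : 0 ≤ q) :
    (a + b) ^ q ≤ 2 ^ q * (a ^ q + b ^ q) := by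
  have hmax : max a b ^ q ≤ a ^ q + b ^ q := by
    rcases max_choice a b with h | h <;> rw [h]
    · exact le_add_of_nonneg_right (rpow_nonneg hb q)
    · exact le_add_of_nonneg_left (rpow_nonneg ha q)
  calc (a + b) ^ q ≤ (2 * max a b) ^ q := by
        gcongr
        linarith [le_max_left a b, le_max_right a b]
    _ = 2 ^ q * max a b ^ q := mul_rpow zero_le_two (le_max_of_le_left ha)
    _ ≤ 2 ^ q * (a ^ q + b ^ q) := by gcongr

end Real

open Real

theorem stmt_0 (a b β : ℝ) (ha : 0 ≤ a) (hb : 0 ≤ b) (hβ : 1 ≤ β) :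
    (a + b) ^ β ≤ a ^ β + β * 2 ^ (β - 1) * (a ^ (β - 1) * b + b ^ β) := by
  have hbβ : b ^ (β - 1) * b = b ^ β := by
    rw [← rpow_add_one' hb (by linarith), sub_add_cancel]
  calc (a + b) ^ β ≤ a ^ β + β * (a + b) ^ (β - 1) * b :=
        add_rpow_le_rpow_add_mul_add_rpow_sub_one_mul ha hb hβ
    _ ≤ a ^ β + β * (2 ^ (β - 1) * (a ^ (β - 1) + b ^ (β - 1))) * b := by
        gcongr
        exact add_rpow_le_two_rpow_mul_add_rpow ha hb (by linarith)
    _ = a ^ β + β * 2 ^ (β - 1) * (a ^ (β - 1) * b + b ^ β) := by rw [← hbβ]; ring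
end

section
/- Let 0 < d < n, 0 < r_m < R. Then sup over |x| ≤ r_m/2 of the integral over {y ∈ ℝⁿ : r_m ≤ |y| ≤ R} of |y|^(−d)·| |x−y|^(d−n) − |y|^(d−n) | dy is bounded by a constant C depending only on n, d, R (independent of r_m and x). -/
open MeasureTheory Set Metric

/-!
For `‖y‖ ≥ r_m ≥ 2‖x‖`, both `‖x - y‖` and `‖y‖` are at least `‖y‖ / 2` and differ by at most
`‖x‖`, so the mean value theorem for `t ↦ t ^ (d - n)` bounds the integrand by
`C ‖x‖ ‖y‖ ^ (-n - 1)`. In polar coordinates the integral of `‖y‖ ^ (-n - 1)` over the annulus is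
`n |B₁| (1 / r_m - 1 / R)`, and `‖x‖ ≤ r_m / 2` absorbs the factor `1 / r_m`.
-/

lemma abs_rpow_sub_rpow_le_of_neg {p m s t : ℝ} (hp : p < 0) (hm : 0 < m) (hs : m ≤ s)
    (ht : m ≤ t) : |s ^ p - t ^ p| ≤ -p * m ^ (p - 1) * |s - t| := by
  refine (convex_Ici m).norm_image_sub_le_of_norm_hasDerivWithin_le
    (f := fun r => r ^ p) (f' := fun r => p * r ^ (p - 1)) (fun r hr => ?_) (fun r hr => ?_) ht hs
  · exact (Real.hasDerivAt_rpow_const (Or.inl (hm.trans_le hr).ne')).hasDerivWithinAt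
  · rw [norm_mul, Real.norm_of_nonpos hp.le,
      Real.norm_of_nonneg (Real.rpow_nonneg (hm.le.trans hr) _)]
    exact mul_le_mul_of_nonneg_left (Real.rpow_le_rpow_of_nonpos hm hr (by linarith)) (by linarith)

lemma abs_norm_sub_rpow_sub_norm_rpow_le {E : Type*} [SeminormedAddCommGroup E] {q : ℝ}
    (hq : q < 0) {x y : E} (hy : 0 < ‖y‖) (hxy : 2 * ‖x‖ ≤ ‖y‖) :
    |‖x - y‖ ^ q - ‖y‖ ^ q| ≤ -q * 2 ^ (1 - q) * ‖x‖ * ‖y‖ ^ (q - 1) := by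
  have hdist : |‖x - y‖ - ‖y‖| ≤ ‖x‖ := by
    simpa [norm_sub_rev x y] using abs_norm_sub_norm_le (y - x) y
  have hfar : ‖y‖ / 2 ≤ ‖x - y‖ := by linarith [(abs_le.mp hdist).1]
  have hscale : (‖y‖ / 2) ^ (q - 1) = 2 ^ (1 - q) * ‖y‖ ^ (q - 1) := by
    rw [Real.div_rpow hy.le zero_le_two, div_eq_mul_inv, ← Real.rpow_neg zero_le_two, neg_sub,
      mul_comm]
  calc |‖x - y‖ ^ q - ‖y‖ ^ q| ≤ -q * (‖y‖ / 2) ^ (q - 1) * |‖x - y‖ - ‖y‖| :=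
        abs_rpow_sub_rpow_le_of_neg hq (by positivity) hfar (by linarith)
    _ ≤ -q * (‖y‖ / 2) ^ (q - 1) * ‖x‖ := by
        gcongr
        exact mul_nonneg (by linarith) (by positivity)
    _ = -q * 2 ^ (1 - q) * ‖x‖ * ‖y‖ ^ (q - 1) := by rw [hscale]; ring

lemma setIntegral_Icc_rpow_neg_two {a b : ℝ} (ha : 0 < a) (hab : a ≤ b) :
    ∫ r in Icc a b, r ^ (-2 : ℝ) = a⁻¹ - b⁻¹ := by
  rw [integral_Icc_eq_integral_Ioc, ← intervalIntegral.integral_of_le hab,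
    integral_rpow (Or.inr ⟨by norm_num, fun h => ?_⟩)]
  · norm_num [Real.rpow_neg_one]
    ring
  · rw [uIcc_of_le hab] at h
    exact (ha.trans_le h.1).ne' rfl

lemma setIntegral_norm_rpow_annulus {E : Type*} [NormedAddCommGroup E] [NormedSpace ℝ E]
    [FiniteDimensional ℝ E] [MeasurableSpace E] [BorelSpace E] [Nontrivial E]
    (μ : Measure E) [μ.IsAddHaarMeasure] {a b : ℝ} (ha : 0 < a) (hab : a ≤ b) :
    ∫ y in {y : E | a ≤ ‖y‖ ∧ ‖y‖ ≤ b}, ‖y‖ ^ (-(Module.finrank ℝ E : ℝ) - 1) ∂μ =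
      Module.finrank ℝ E * μ.real (ball 0 1) * (a⁻¹ - b⁻¹) := by
  set N := Module.finrank ℝ E
  have hN : 1 ≤ N := Module.finrank_pos
  have hradial : ∀ r ∈ Ioi (0 : ℝ), r ^ (N - 1) • (Icc a b).indicator (· ^ (-(N : ℝ) - 1)) r =
      (Icc a b).indicator (· ^ (-2 : ℝ)) r := by
    intro r (hr : 0 < r)
    by_cases hab : r ∈ Icc a b
    · simp only [indicator_of_mem hab, smul_eq_mul]
      rw [← Real.rpow_natCast, ← Real.rpow_add hr, Nat.cast_sub hN, Nat.cast_one]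
      ring_nf
    · simp [indicator_of_notMem hab]
  have hsub : Icc a b ⊆ Ioi 0 := fun r hr => ha.trans_le hr.1
  calc ∫ y in {y : E | a ≤ ‖y‖ ∧ ‖y‖ ≤ b}, ‖y‖ ^ (-(N : ℝ) - 1) ∂μ
      = ∫ y, (Icc a b).indicator (· ^ (-(N : ℝ) - 1)) ‖y‖ ∂μ := by
        have hmeas : MeasurableSet {y : E | a ≤ ‖y‖ ∧ ‖y‖ ≤ b} :=
          measurableSet_Icc.preimage continuous_norm.measurable
        rw [← integral_indicator hmeas]
        rfl
    _ = N * μ.real (ball 0 1) * ∫ r in Ioi 0, (Icc a b).indicator (· ^ (-2 : ℝ)) r := by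
        rw [integral_fun_norm_addHaar, setIntegral_congr_fun measurableSet_Ioi hradial,
          nsmul_eq_mul, smul_eq_mul, mul_assoc]
    _ = N * μ.real (ball 0 1) * (a⁻¹ - b⁻¹) := by
        rw [setIntegral_indicator measurableSet_Icc, inter_eq_self_of_subset_right hsub,
          setIntegral_Icc_rpow_neg_two ha hab]

lemma integrableOn_norm_rpow_annulus {E : Type*} [NormedAddCommGroup E] [ProperSpace E]
    [MeasurableSpace E] [OpensMeasurableSpace E] (μ : Measure E) [IsFiniteMeasureOnCompacts μ]
    (s : ℝ) {a b : ℝ} (ha : 0 < a) :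
    IntegrableOn (fun y => ‖y‖ ^ s) {y : E | a ≤ ‖y‖ ∧ ‖y‖ ≤ b} μ := by
  have hcompact : IsCompact {y : E | a ≤ ‖y‖ ∧ ‖y‖ ≤ b} :=
    (isCompact_closedBall 0 b).of_isClosed_subset
      ((isClosed_le continuous_const continuous_norm).inter
        (isClosed_le continuous_norm continuous_const))
      fun y hy => mem_closedBall_zero_iff.mpr hy.2
  refine ContinuousOn.integrableOn_compact hcompact ?_
  exact continuous_norm.continuousOn.rpow_const fun y hy => Or.inl (ha.trans_le hy.1).ne'

lemma rpow_neg_mul_abs_norm_sub_rpow_sub_le {E : Type*} [SeminormedAddCommGroup E] {d N : ℝ}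
    (hdN : d < N) {x y : E} (hy : 0 < ‖y‖) (hxy : 2 * ‖x‖ ≤ ‖y‖) :
    ‖y‖ ^ (-d) * |‖x - y‖ ^ (d - N) - ‖y‖ ^ (d - N)| ≤
      (N - d) * 2 ^ (1 + N - d) * ‖x‖ * ‖y‖ ^ (-N - 1) :=
  calc ‖y‖ ^ (-d) * |‖x - y‖ ^ (d - N) - ‖y‖ ^ (d - N)|
      ≤ ‖y‖ ^ (-d) * (-(d - N) * 2 ^ (1 - (d - N)) * ‖x‖ * ‖y‖ ^ (d - N - 1)) := by
        gcongr
        exact abs_norm_sub_rpow_sub_norm_rpow_le (by linarith) hy hxy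
    _ = (N - d) * 2 ^ (1 + N - d) * ‖x‖ * ‖y‖ ^ (-N - 1) := by
        rw [show -N - 1 = -d + (d - N - 1) by ring, Real.rpow_add hy,
          show 1 - (d - N) = 1 + N - d by ring]
        ring

theorem stmt_4_general (n : ℕ) (d R : ℝ) (hd0 : 0 < d) (hdn : d < n) :
    ∃ C : ℝ, ∀ (rm : ℝ), 0 < rm → rm < R →
      ∀ x : EuclideanSpace ℝ (Fin n), ‖x‖ ≤ rm / 2 →
      (∫ y in {y : EuclideanSpace ℝ (Fin n) | rm ≤ ‖y‖ ∧ ‖y‖ ≤ R},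
          ‖y‖ ^ (-d) * |‖x - y‖ ^ (d - n) - ‖y‖ ^ (d - n)|) ≤ C := by
  set E := EuclideanSpace ℝ (Fin n)
  have : Nontrivial E := Module.nontrivial_of_finrank_pos (R := ℝ) <| by
    rw [finrank_euclideanSpace_fin]; exact_mod_cast hd0.trans hdn
  set K : ℝ := (n - d) * 2 ^ (1 + n - d)
  set V : ℝ := n * volume.real (ball (0 : E) 1)
  refine ⟨K * V / 2, fun rm hrm hrmR x hx => ?_⟩
  have hannulus := setIntegral_norm_rpow_annulus (volume : Measure E) hrm hrmR.le
  rw [finrank_euclideanSpace_fin] at hannulus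
  have hinv : R⁻¹ ≤ rm⁻¹ := inv_anti₀ hrm hrmR.le
  calc (∫ y in {y : E | rm ≤ ‖y‖ ∧ ‖y‖ ≤ R}, ‖y‖ ^ (-d) * |‖x - y‖ ^ (d - n) - ‖y‖ ^ (d - n)|)
      ≤ ∫ y in {y : E | rm ≤ ‖y‖ ∧ ‖y‖ ≤ R}, K * ‖x‖ * ‖y‖ ^ (-(n : ℝ) - 1) :=
        setIntegral_mono_of_nonneg (fun y _ => by positivity)
          (fun y hy => rpow_neg_mul_abs_norm_sub_rpow_sub_le hdn (hrm.trans_le hy.1)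
            (by linarith [hy.1]))
          ((integrableOn_norm_rpow_annulus _ _ hrm).const_mul _)
    _ = K * ‖x‖ * (V * (rm⁻¹ - R⁻¹)) := by rw [integral_const_mul, hannulus]
    _ ≤ K * (rm / 2) * (V * rm⁻¹) := by
        gcongr
        exact sub_le_self _ (inv_nonneg.mpr (hrm.trans hrmR).le)
    _ = K * V / 2 := by field_simp

theorem stmt_4 (n : ℕ) (d R : ℝ) (hd0 : 0 < d) (hdn : d < n) (hR : 0 < R) :
    ∃ C : ℝ, ∀ (rm : ℝ), 0 < rm → rm < R →
      ∀ x : EuclideanSpace ℝ (Fin n), ‖x‖ ≤ rm / 2 →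
      (∫ y in {y : EuclideanSpace ℝ (Fin n) | rm ≤ ‖y‖ ∧ ‖y‖ ≤ R},
          ‖y‖ ^ (-d) * |‖x - y‖ ^ (d - n) - ‖y‖ ^ (d - n)|) ≤ C :=
  stmt_4_general n d R hd0 hdn
end

section
/- Let f : M → [−∞,∞] be measurable on a finite measure space, A, β, γ > 0, C > 0 and s₀ > 1. Then the condition m(f,s) ≤ A·s^(−β)·(1 + C·(log s)^(−γ)) for all s > s₀ holds if and only if there exist C' > 0 and t₀ < 1 with f*(t) ≤ A^(1/β)·t^(−1/β)·(1 + C'·|log t|^(−γ)) for all t < t₀. -/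
open MeasureTheory Real

/-- The nonincreasing rearrangement of `f` with respect to `μ`, at level `t : ℝ≥0∞`:
`f*(t) = inf {s ≥ 0 : μ{|f| > s} ≤ t}`. -/
noncomputable def rearrangement {α : Type*} [MeasurableSpace α] (μ : Measure α)
    (f : α → ℝ) (t : ENNReal) : ℝ :=
  sInf {s : ℝ | 0 ≤ s ∧ μ {x | s < |f x|} ≤ t}

/-!
Both conditions compare `f` with a profile `P_{K,p,c}(x) = K x^{-p} (1 + c |log x|^{-γ})`: the
distribution function with `P_{A,β,C}` near `∞`, the rearrangement with `P_{A^{1/β},1/β,C'}`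
near `0`. For a suitable `c'` these profiles are approximate inverses,
`P_{K,p,c} (P_{K^{1/p},1/p,c'} x) ≤ x` as `|log x| → ∞`: writing the inner value as
`K^{1/p} x^{-1/p} (1 + u)`, the outer power cancels everything but `(1 + u)^{-p}`, and the
Bernoulli-type bound `(1 + u)^p ≥ 1 + p u / 2` absorbs the logarithmic correction because the
logarithm of the inner value is at least `|log x| / (2p)` in absolute value. The equivalence then
follows from the duality `m(f,s) ≤ t ⇔ f*(t) ≤ s` (for `s ≥ 0`, `t > 0`).
-/

open Filter Topology Set
open scoped ENNReal

section Rearrangement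

variable {α : Type*} [MeasurableSpace α] {μ : Measure α} {f : α → ℝ}

theorem rearrangement_le_of_measure_le {s : ℝ} {t : ℝ≥0∞} (hs : 0 ≤ s)
    (h : μ {x | s < |f x|} ≤ t) : rearrangement μ f t ≤ s :=
  csInf_le ⟨0, fun _ hy => hy.1⟩ ⟨hs, h⟩

theorem exists_measure_natCast_lt_abs_le [IsFiniteMeasure μ] (hf : Measurable f) {t : ℝ≥0∞}
    (ht : t ≠ 0) : ∃ n : ℕ, μ {x | (n : ℝ) < |f x|} ≤ t := by
  have hanti : Antitone fun n : ℕ => {x | (n : ℝ) < |f x|} := fun m n hmn x hx =>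
    show (m : ℝ) < |f x| from (Nat.cast_le.2 hmn).trans_lt hx
  have hempty : ⋂ n : ℕ, {x | (n : ℝ) < |f x|} = ∅ := by
    refine eq_empty_of_forall_notMem fun x hx => ?_
    obtain ⟨n, hn⟩ := exists_nat_ge |f x|
    exact (mem_iInter.1 hx n).not_ge hn
  have htend := tendsto_measure_iInter_atTop
    (fun _ => (measurableSet_lt measurable_const hf.abs).nullMeasurableSet) hanti
    ⟨0, measure_ne_top μ _⟩
  rw [hempty, measure_empty] at htend
  exact (htend.eventually_le_const (pos_iff_ne_zero.2 ht)).exists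

/-- The infimum defining `f*(t)` is attained, by right-continuity of `s ↦ μ {s < |f|}`. -/
theorem measure_rearrangement_lt_abs_le [IsFiniteMeasure μ] (hf : Measurable f) {t : ℝ≥0∞}
    (ht : t ≠ 0) : μ {x | rearrangement μ f t < |f x|} ≤ t := by
  set r := rearrangement μ f t
  have hne : {s : ℝ | 0 ≤ s ∧ μ {x | s < |f x|} ≤ t}.Nonempty := by
    obtain ⟨n, hn⟩ := exists_measure_natCast_lt_abs_le (μ := μ) hf ht
    exact ⟨n, n.cast_nonneg, hn⟩
  have hunion : {x | r < |f x|} = ⋃ n : ℕ, {x | r + 1 / ((n : ℝ) + 1) < |f x|} := by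
    ext x
    simp only [mem_ofPred_eq, mem_iUnion]
    refine ⟨fun hx => ?_,
      fun ⟨n, hn⟩ => (lt_add_of_pos_right r Nat.one_div_pos_of_nat).trans hn⟩
    obtain ⟨n, hn⟩ := exists_nat_one_div_lt (sub_pos.2 hx)
    exact ⟨n, by linarith⟩
  have hmono : Monotone fun n : ℕ => {x | r + 1 / ((n : ℝ) + 1) < |f x|} :=
    fun m n hmn x (hx : r + 1 / ((m : ℝ) + 1) < |f x|) =>
      show r + 1 / ((n : ℝ) + 1) < |f x| by linarith [Nat.one_div_le_one_div (α := ℝ) hmn]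
  rw [hunion, hmono.measure_iUnion]
  refine iSup_le fun n => ?_
  obtain ⟨s, hs, hrs⟩ :=
    exists_lt_of_csInf_lt hne (lt_add_of_pos_right r Nat.one_div_pos_of_nat)
  exact (measure_mono (μ := μ) fun x hx => hrs.trans hx).trans hs.2

end Rearrangement

theorem one_add_half_mul_le_one_add_rpow {p u : ℝ} (hp : 0 ≤ p) (hu₀ : 0 ≤ u)
    (hu₁ : u ≤ 1) : 1 + p / 2 * u ≤ (1 + u) ^ p := by
  have h1u : 0 < 1 + u := by linarith
  have hlog : u / 2 ≤ log (1 + u) := calc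
    u / 2 ≤ u / (1 + u) := div_le_div_of_nonneg_left hu₀ h1u (by linarith)
    _ = 1 - (1 + u)⁻¹ := by field_simp; ring
    _ ≤ log (1 + u) := one_sub_inv_le_log_of_pos h1u
  calc 1 + p / 2 * u ≤ p * log (1 + u) + 1 := by nlinarith
    _ ≤ exp (p * log (1 + u)) := add_one_le_exp _
    _ = (1 + u) ^ p := by rw [rpow_def_of_pos h1u, mul_comm]


noncomputable def perturbedRpow (K p c γ x : ℝ) : ℝ :=
  K * x ^ (-p) * (1 + c * |log x| ^ (-γ))

theorem perturbedRpow_of_one_lt {K p c γ x : ℝ} (hx : 1 < x) :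
    perturbedRpow K p c γ x = K * x ^ (-p) * (1 + c * log x ^ (-γ)) := by
  rw [perturbedRpow, abs_of_pos (log_pos hx)]

theorem perturbedRpow_pos {K p c γ x : ℝ} (hK : 0 < K) (hc : 0 ≤ c) (hx : 0 < x) :
    0 < perturbedRpow K p c γ x := by
  unfold perturbedRpow; positivity

theorem one_add_mul_rpow_neg_le_one_add_rpow {p γ c L Λ : ℝ} (hp : 0 < p) (hγ : 0 ≤ γ)
    (hc : 0 ≤ c) (hL : 0 < L) (hΛ : L / (2 * p) ≤ Λ)
    (hu : 2 * c * (2 * p) ^ γ / p * L ^ (-γ) ≤ 1) :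
    1 + c * Λ ^ (-γ) ≤ (1 + 2 * c * (2 * p) ^ γ / p * L ^ (-γ)) ^ p := by
  have hscale : (L / (2 * p)) ^ (-γ) = (2 * p) ^ γ * L ^ (-γ) := by
    rw [div_rpow hL.le (by positivity), div_eq_mul_inv,
      rpow_neg (by positivity : (0 : ℝ) ≤ 2 * p), inv_inv, mul_comm]
  calc 1 + c * Λ ^ (-γ) ≤ 1 + c * (L / (2 * p)) ^ (-γ) := by
        gcongr 1 + c * ?_
        exact rpow_le_rpow_of_nonpos (by positivity : 0 < L / (2 * p)) hΛ (neg_nonpos.2 hγ)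
    _ = 1 + p / 2 * (2 * c * (2 * p) ^ γ / p * L ^ (-γ)) := by
        rw [hscale]; field_simp
    _ ≤ _ := one_add_half_mul_le_one_add_rpow hp.le (by positivity) hu

theorem mul_mul_rpow_neg_of_rpow_eq {K a p q x v : ℝ} (ha : 0 < a) (hK : a ^ p = K)
    (hpq : p * q = 1) (hx : 0 < x) (hv : 0 < v) :
    K * (a * x ^ (-q) * v) ^ (-p) = x * v ^ (-p) := by
  have hK₀ : 0 < K := hK ▸ rpow_pos_of_pos ha p
  have hqp : -q * -p = 1 := by rw [neg_mul_neg, mul_comm, hpq]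
  rw [mul_rpow (by positivity) hv.le, mul_rpow ha.le (by positivity), ← rpow_mul hx.le, hqp,
    rpow_one, rpow_neg ha.le, hK]
  field_simp

theorem half_mul_abs_log_le_abs_log_mul_rpow {a q x v : ℝ} (ha : 0 < a) (hx : 0 < x)
    (hv₁ : 1 ≤ v) (hv₂ : v ≤ 2) (h : 2 * (|log a| + 1) ≤ q * |log x|) :
    q * |log x| / 2 ≤ |log (a * x ^ (-q) * v)| := by
  have hlogv₀ : 0 ≤ log v := log_nonneg hv₁
  have hlogv₁ : log v ≤ 1 := by linarith [log_le_sub_one_of_pos (by linarith : 0 < v)]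
  rw [log_mul (by positivity) (by positivity), log_mul ha.ne' (by positivity), log_rpow hx]
  rcases abs_cases (log x) with ⟨hlx, hlx'⟩ | ⟨hlx, hlx'⟩ <;> rw [hlx] at h ⊢ <;>
    rcases abs_cases (log a) with ⟨hla, hla'⟩ | ⟨hla, hla'⟩ <;> rw [hla] at h
  all_goals first
    | exact le_abs.2 (Or.inl (by linarith))
    | exact le_abs.2 (Or.inr (by linarith))

theorem eventually_perturbedRpow_perturbedRpow_le {K a p q c γ : ℝ} (ha : 0 < a)
    (hK : a ^ p = K) (hp : 0 < p) (hpq : p * q = 1) (hc : 0 < c) (hγ : 0 < γ) {l : Filter ℝ}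
    (hl₀ : ∀ᶠ x in l, 0 < x) (hl : Tendsto (fun x => |log x|) l atTop) :
    ∃ c' > 0, ∀ᶠ x in l, perturbedRpow K p c γ (perturbedRpow a q c' γ x) ≤ x := by
  -- `c |log y|^{-γ} ≤ c (2p)^γ |log x|^{-γ} = (p / 2) u` for the inner value `y`
  refine ⟨2 * c * (2 * p) ^ γ / p, by positivity, ?_⟩
  set c' := 2 * c * (2 * p) ^ γ / p
  have hc'₀ : 0 < c' := by positivity
  have hq : q = 1 / p := by rw [eq_div_iff hp.ne', mul_comm, hpq]
  have hq₀ : 0 < q := by rw [hq]; positivity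
  have hsmall : ∀ᶠ x in l, c' * |log x| ^ (-γ) ≤ 1 := by
    have := ((tendsto_rpow_neg_atTop hγ).comp hl).const_mul c'
    rw [mul_zero] at this
    exact this.eventually_le_const one_pos
  have hlarge : ∀ᶠ x in l, 2 * (|log a| + 1) ≤ q * |log x| :=
    (hl.const_mul_atTop hq₀).eventually_ge_atTop _
  filter_upwards [hl₀, hsmall, hlarge, hl.eventually_gt_atTop 0] with x hx hu hlog hL
  have hu₀ : 0 ≤ c' * |log x| ^ (-γ) := by positivity
  have hΛ : |log x| / (2 * p) ≤ |log (perturbedRpow a q c' γ x)| := calc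
    |log x| / (2 * p) = q * |log x| / 2 := by rw [hq]; field_simp
    _ ≤ _ := half_mul_abs_log_le_abs_log_mul_rpow ha hx (by linarith) (by linarith) hlog
  calc perturbedRpow K p c γ (perturbedRpow a q c' γ x)
      = x * (1 + c' * |log x| ^ (-γ)) ^ (-p) *
          (1 + c * |log (perturbedRpow a q c' γ x)| ^ (-γ)) := by
        rw [perturbedRpow, perturbedRpow,
          mul_mul_rpow_neg_of_rpow_eq ha hK hpq hx (by positivity)]
    _ ≤ x * (1 + c' * |log x| ^ (-γ)) ^ (-p) * (1 + c' * |log x| ^ (-γ)) ^ p := by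
        gcongr
        exact one_add_mul_rpow_neg_le_one_add_rpow hp hγ.le hc.le hL hΛ hu
    _ = x := by rw [mul_assoc, ← rpow_add (by positivity), neg_add_cancel, rpow_zero, mul_one]

theorem tendsto_perturbedRpow_nhdsGT_zero {a q c γ : ℝ} (ha : 0 < a) (hq : 0 < q)
    (hc : 0 ≤ c) : Tendsto (perturbedRpow a q c γ) (𝓝[>] 0) atTop := by
  refine tendsto_atTop_mono' _ ?_
    ((tendsto_rpow_neg_nhdsGT_zero (neg_lt_zero.2 hq)).const_mul_atTop ha)
  filter_upwards [self_mem_nhdsWithin] with x (hx : 0 < x)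
  exact le_mul_of_one_le_right (by positivity)
    (by simp only [le_add_iff_nonneg_right]; positivity)

theorem tendsto_perturbedRpow_atTop {K p c γ : ℝ} (hK : 0 < K) (hp : 0 < p) (hc : 0 ≤ c)
    (hγ : 0 < γ) : Tendsto (perturbedRpow K p c γ) atTop (𝓝[>] 0) := by
  refine tendsto_nhdsWithin_iff.2 ⟨?_, ?_⟩
  · change Tendsto (fun x => K * x ^ (-p) * (1 + c * |log x| ^ (-γ))) atTop (𝓝 0)
    have hlog :=
      (tendsto_rpow_neg_atTop hγ).comp (tendsto_abs_atTop_atTop.comp tendsto_log_atTop)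
    simpa using ((tendsto_rpow_neg_atTop hp).const_mul K).mul ((hlog.const_mul c).const_add 1)
  · filter_upwards [eventually_gt_atTop 0] with x hx using perturbedRpow_pos hK hc hx

theorem exists_forall_of_eventually_nhdsGT_zero {P : ℝ → Prop}
    (h : ∀ᶠ t in 𝓝[>] 0, P t) : ∃ t₀ < 1, 0 < t₀ ∧ ∀ t, 0 < t → t < t₀ → P t := by
  obtain ⟨u, hu, hsub⟩ := mem_nhdsGT_iff_exists_Ioo_subset.1 h
  refine ⟨min u (1 / 2), by linarith [min_le_right u (1 / 2)], lt_min hu one_half_pos,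
    fun t ht htu => hsub ⟨ht, htu.trans_le (min_le_left _ _)⟩⟩

theorem stmt_8 {M : Type*} [MeasurableSpace M] (μ : Measure M) [IsFiniteMeasure μ]
    (f : M → ℝ) (hf : Measurable f) (A β γ : ℝ) (hA : 0 < A) (hβ : 0 < β) (hγ : 0 < γ) :
    (∃ C > (0 : ℝ), ∃ s₀ > (1 : ℝ), ∀ s > s₀,
        μ {x | s < |f x|} ≤ ENNReal.ofReal (A * s ^ (-β) * (1 + C * (Real.log s) ^ (-γ)))) ↔
    (∃ C' > (0 : ℝ), ∃ t₀ : ℝ, t₀ < 1 ∧ 0 < t₀ ∧ ∀ t : ℝ, 0 < t → t < t₀ →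
        rearrangement μ f (ENNReal.ofReal t) ≤
          A ^ (1 / β) * t ^ (-(1 / β)) * (1 + C' * |Real.log t| ^ (-γ))) := by
  have hβ' : 0 < 1 / β := by positivity
  have hAβ : 0 < A ^ (1 / β) := rpow_pos_of_pos hA _
  constructor
  · rintro ⟨C, hC, s₀, hs₀, hm⟩
    obtain ⟨C', hC', hcomp⟩ := eventually_perturbedRpow_perturbedRpow_le hAβ
      (by rw [one_div, rpow_inv_rpow hA.le hβ.ne']) hβ (mul_one_div_cancel hβ.ne') hC hγ
      self_mem_nhdsWithin (tendsto_abs_atBot_atTop.comp tendsto_log_nhdsGT_zero)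
    obtain ⟨t₀, ht₀₁, ht₀, h⟩ := exists_forall_of_eventually_nhdsGT_zero <| hcomp.and <|
      (tendsto_perturbedRpow_nhdsGT_zero hAβ hβ' hC'.le).eventually_gt_atTop s₀
    refine ⟨C', hC', t₀, ht₀₁, ht₀, fun t ht htt₀ => ?_⟩
    obtain ⟨hle, hs⟩ := h t ht htt₀
    refine rearrangement_le_of_measure_le (perturbedRpow_pos hAβ hC'.le ht).le
      ((hm _ hs).trans ?_)
    rw [← perturbedRpow_of_one_lt (hs₀.trans hs)]
    exact ENNReal.ofReal_le_ofReal hle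
  · rintro ⟨C', hC', t₀, -, ht₀, hr⟩
    obtain ⟨C, hC, hcomp⟩ := eventually_perturbedRpow_perturbedRpow_le hA rfl hβ'
      (one_div_mul_cancel hβ.ne') hC' hγ (eventually_gt_atTop 0)
      (tendsto_abs_atTop_atTop.comp tendsto_log_atTop)
    obtain ⟨s₀, h⟩ := (hcomp.and (((tendsto_perturbedRpow_atTop hA hβ hC.le hγ).eventually
      (Ioo_mem_nhdsGT ht₀)).and (eventually_gt_atTop 1))).exists_forall_of_atTop
    refine ⟨C, hC, max s₀ 2, by simp, fun s hs => ?_⟩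
    obtain ⟨hle, ⟨ht, htt₀⟩, hs₁⟩ := h s ((le_max_left _ _).trans hs.le)
    have hrs := (hr _ ht htt₀).trans hle
    rw [← perturbedRpow_of_one_lt hs₁]
    exact (measure_mono fun x hx => hrs.trans_lt hx).trans
      (measure_rearrangement_lt_abs_le hf (ENNReal.ofReal_pos.2 ht).ne')
end
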